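/- arXiv:2110.10535 — 2 statements merged into one kernel-verified Lean document; each statement's English description precedes it below -/
import Mathlib

section
/- Let TS be a solvable set CEST-system (every transition label is a set) such that (TS^seq)^rev is solvable. Then TS^rev is solvable. -/
/-! Common formalization of step transition systems, CEST-systems,
reversing constructions, PT-nets, and solvability. -/

structure STS (S : Type*) (A : Type*) where
  T : Finset A
  tr : S → Multiset A → S → Prop
  init : S

namespace STS

variable {S S' : Type*} {A : Type*}

/-- All transition labels are multisets over the action set `T`. -/
def LabelsIn (X : STS S A) : Prop :=
  ∀ s (α : Multiset A) s', X.tr s α s' → ∀ a ∈ α, a ∈ X.T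

/-- The integer action vector of a step. -/
def stepVec [DecidableEq A] (α : Multiset A) : A → ℤ :=
  fun a => (α.count a : ℤ)

/-- `PathSig X s r v` holds iff there is an undirected path from `s` to `r`
with signature `v`. -/
inductive PathSig [DecidableEq A] (X : STS S A) : S → S → (A → ℤ) → Prop
  | nil (s : S) : PathSig X s s 0
  | fwd {s r r' : S} {α : Multiset A} {v : A → ℤ} :
      PathSig X s r v → X.tr r α r' → PathSig X s r' (v + stepVec α)
  | bwd {s r r' : S} {α : Multiset A} {v : A → ℤ} :
      PathSig X s r v → X.tr r' α r → PathSig X s r' (v - stepVec α)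

/-- The least addition-closed equivalence relating signatures of any two
undirected paths with the same source and target. -/
inductive Bowtie [DecidableEq A] (X : STS S A) : (A → ℤ) → (A → ℤ) → Prop
  | base {s r : S} {v w : A → ℤ} :
      PathSig X s r v → PathSig X s r w → Bowtie X v w
  | refl (v : A → ℤ) : Bowtie X v v
  | symm {v w : A → ℤ} : Bowtie X v w → Bowtie X w v
  | trans {u v w : A → ℤ} : Bowtie X u v → Bowtie X v w → Bowtie X u w
  | add {v w v' w' : A → ℤ} :
      Bowtie X v w → Bowtie X v' w' → Bowtie X (v + v') (w + w')

/-- Constant effect. -/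
def CE [DecidableEq A] (X : STS S A) : Prop :=
  ∀ (s r r' : S) (v w : A → ℤ),
    PathSig X s r v → PathSig X s r' w → Bowtie X v w → r = r'

/-- Reachability by forward transitions. -/
inductive ReachFrom (X : STS S A) : S → S → Prop
  | refl (s : S) : ReachFrom X s s
  | step {s r r' : S} {α : Multiset A} :
      ReachFrom X s r → X.tr r α r' → ReachFrom X s r'

/-- Every state is reachable from the initial state. -/
def REA (X : STS S A) : Prop := ∀ s, X.ReachFrom X.init s

/-- Empty loops. -/
def EL (X : STS S A) : Prop := ∀ s, X.tr s 0 s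

/-- Sequentialisability. -/
def SEQ (X : STS S A) : Prop :=
  ∀ (s : S) (α β : Multiset A), (∃ s', X.tr s (α + β) s') →
    ∃ s', X.tr s α s' ∧ ∃ s'', X.tr s' β s''

/-- A CEST-system: a step transition system satisfying CE, REA, EL and SEQ. -/
def IsCEST [DecidableEq A] (X : STS S A) : Prop :=
  X.LabelsIn ∧ X.CE ∧ X.REA ∧ X.EL ∧ X.SEQ

/-- Step-finiteness: at every state only finitely many steps are enabled. -/
def StepFinite (X : STS S A) : Prop :=
  ∀ s, {α : Multiset A | ∃ s', X.tr s α s'}.Finite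

/-- Retain only transitions whose label has size at most 1. -/
def seqR (X : STS S A) : STS S A :=
  { X with tr := fun s α s' => X.tr s α s' ∧ Multiset.card α ≤ 1 }

/-- Retain only transitions whose label is a set. -/
def setR (X : STS S A) : STS S A :=
  { X with tr := fun s α s' => X.tr s α s' ∧ α.Nodup }

/-- Retain only transitions whose label has support of size at most 1. -/
def spikeR [DecidableEq A] (X : STS S A) : STS S A :=
  { X with tr := fun s α s' => X.tr s α s' ∧ α.toFinset.card ≤ 1 }

variable [DecidableEq A]

/-- `bar` is a proper reversing map for the actions of `X`: reverses are
pairwise distinct and fresh. -/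
def GoodRev (X : STS S A) (bar : A → A) : Prop :=
  Set.InjOn bar ↑X.T ∧ ∀ a ∈ X.T, bar a ∉ X.T

/-- The action set `T ⊎ T̄`. -/
def revT (X : STS S A) (bar : A → A) : Finset A := X.T ∪ X.T.image bar

/-- The direct reverse `TS^rev` (in a CEST-system, `s –α→ s'` means `s' = s⊕α`). -/
def revSTS (X : STS S A) (bar : A → A) : STS S A where
  T := revT X bar
  tr s γ s' := X.tr s γ s' ∨ ∃ α : Multiset A, γ = Multiset.map bar α ∧ X.tr s' α s
  init := X.init

/-- The set reverse `TS^setrev`. -/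
def setrevSTS (X : STS S A) (bar : A → A) : STS S A where
  T := revT X bar
  tr s γ s' := X.tr s γ s' ∨
    ∃ α : Multiset A, γ = Multiset.map bar α ∧ α.Nodup ∧ X.tr s' α s
  init := X.init

/-- The mixed reverse `TS^mixrev`: transitions `(s⊕α, ᾱ+β, s⊕β)` for `s –(α+β)→`. -/
def mixrevSTS (X : STS S A) (bar : A → A) : STS S A where
  T := revT X bar
  tr u γ v := ∃ (s : S) (α β : Multiset A),
      γ = Multiset.map bar α + β ∧ (∃ w, X.tr s (α + β) w) ∧
      X.tr s α u ∧ X.tr s β v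
  init := X.init

/-- `Y` is a split reverse of `X` (w.r.t. reversing map `bar` and the
index-removing map `noidx`). -/
def IsSplitRev (X : STS S A) (bar noidx : A → A) (Y : STS S A) : Prop :=
  Y.init = X.init ∧
  Y.LabelsIn ∧
  X.T ⊆ Y.T ∧
  (∀ a ∈ X.T, noidx a = a) ∧
  Disjoint X.T ((Y.T \ X.T).image noidx) ∧
  Y.SEQ ∧
  Y.T.image noidx = revT X bar ∧
  ∀ (s : S) (γ : Multiset A) (s' : S),
    (∃ δ : Multiset A, Y.tr s δ s' ∧ γ = Multiset.map noidx δ) ↔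
      (revSTS X bar).tr s γ s'

/-- Inclusion with the identity map on states (`⊴`). -/
def SubId (X Y : STS S A) : Prop :=
  X.init = Y.init ∧ X.T ⊆ Y.T ∧
  ∀ s (α : Multiset A) s', X.tr s α s' → Y.tr s α s'

/-- Inclusion (`◁`) via a bijection of states. -/
def Incl (X : STS S A) (Y : STS S' A) : Prop :=
  ∃ ψ : S ≃ S', ψ X.init = Y.init ∧ X.T ⊆ Y.T ∧
    ∀ s (α : Multiset A) s', X.tr s α s' → Y.tr (ψ s) α (ψ s')

/-- Isomorphism of step transition systems. -/
def IsoSTS (X : STS S A) (Y : STS S' A) : Prop :=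
  ∃ ψ : S ≃ S', ψ X.init = Y.init ∧ X.T = Y.T ∧
    ∀ s (α : Multiset A) s', X.tr s α s' ↔ Y.tr (ψ s) α (ψ s')

/-- `TS̄_r`: the reversed system restricted to the states from which `r` is
reachable in `X`, with initial state `r`. -/
def revRestrict (X : STS S A) (bar : A → A) (r : S) :
    STS {s : S // X.ReachFrom s r} A where
  T := X.T.image bar
  tr u γ v := ∃ α : Multiset A, γ = Multiset.map bar α ∧ X.tr v.1 α u.1
  init := ⟨r, ReachFrom.refl r⟩

end STS

/-- A place/transition net. -/
structure PTNet (P : Type*) (A : Type*) where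
  T : Finset A
  pre : P → A → ℕ
  post : A → P → ℕ
  M0 : P → ℕ
  pre_pos : ∀ a ∈ T, ∃ p, 0 < pre p a

namespace PTNet

variable {P A : Type*}

def PRE (N : PTNet P A) (α : Multiset A) (p : P) : ℕ :=
  (α.map fun a => N.pre p a).sum

def POST (N : PTNet P A) (α : Multiset A) (p : P) : ℕ :=
  (α.map fun a => N.post a p).sum

def Enabled (N : PTNet P A) (M : P → ℕ) (α : Multiset A) : Prop :=
  (∀ a ∈ α, a ∈ N.T) ∧ ∀ p, N.PRE α p ≤ M p

def fire (N : PTNet P A) (M : P → ℕ) (α : Multiset A) : P → ℕ :=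
  fun p => M p - N.PRE α p + N.POST α p

inductive Reach (N : PTNet P A) : (P → ℕ) → Prop
  | init : Reach N N.M0
  | step {M : P → ℕ} {α : Multiset A} :
      Reach N M → N.Enabled M α → Reach N (N.fire M α)

/-- The subnet induced by a set of actions (same places, same marking). -/
def restrict [DecidableEq A] (N : PTNet P A) (T' : Finset A) : PTNet P A where
  T := N.T ∩ T'
  pre := N.pre
  post := N.post
  M0 := N.M0
  pre_pos := fun a ha => N.pre_pos a (Finset.mem_of_mem_inter_left ha)

end PTNet

/-- The concurrent reachability graph of a PT-net. -/
def CRG {P A : Type*} (N : PTNet P A) : STS {M : P → ℕ // N.Reach M} A where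
  T := N.T
  tr M α M' := N.Enabled M.1 α ∧ M'.1 = N.fire M.1 α
  init := ⟨N.M0, PTNet.Reach.init⟩

/-- A step transition system is solvable if it is isomorphic to the
concurrent reachability graph of some PT-net. -/
def STSSolvable {S A : Type*} (X : STS S A) : Prop :=
  ∃ (n : ℕ) (N : PTNet (Fin n) A), STS.IsoSTS X (CRG N)

/-- An unmarked PT-net. -/
structure UPTNet (P : Type*) (A : Type*) where
  T : Finset A
  pre : P → A → ℕ
  post : A → P → ℕ
  pre_pos : ∀ a ∈ T, ∃ p, 0 < pre p a

def UPTNet.withM {P A : Type*} (U : UPTNet P A) (M : P → ℕ) : PTNet P A :=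
  ⟨U.T, U.pre, U.post, M, U.pre_pos⟩

/-- Solvability of the reversed system `TS̄` with multiple initial states `R`:
one unmarked PT-net and one map `ψ` solving each `TS̄_r` via `ψ(r)` as the
initial marking. -/
def RevMultiSolvable {S A : Type*} [DecidableEq A] (X : STS S A) (bar : A → A)
    (R : Set S) : Prop :=
  ∃ (n : ℕ) (U : UPTNet (Fin n) A) (ψ : S → Fin n → ℕ),
    ∀ r ∈ R,
      ∃ e : {s : S // X.ReachFrom s r} ≃
              {M : Fin n → ℕ // (U.withM (ψ r)).Reach M},
        (∀ s, (e s).1 = ψ s.1) ∧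
        (X.revRestrict bar r).T = (CRG (U.withM (ψ r))).T ∧
        ∀ s (α : Multiset A) s',
          (X.revRestrict bar r).tr s α s' ↔ (CRG (U.withM (ψ r))).tr (e s) α (e s')

/-- A PT-net with weighted read arcs. -/
structure PTRNet (P : Type*) (A : Type*) where
  T : Finset A
  pre : P → A → ℕ
  post : A → P → ℕ
  read : P → A → Option ℕ
  M0 : P → ℕ
  pre_pos : ∀ a ∈ T, ∃ p, 0 < pre p a

namespace PTRNet

variable {P A : Type*}

def toPTNet (N : PTRNet P A) : PTNet P A := ⟨N.T, N.pre, N.post, N.M0, N.pre_pos⟩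

def Enabled (N : PTRNet P A) (M : P → ℕ) (α : Multiset A) : Prop :=
  N.toPTNet.Enabled M α ∧ ∀ a ∈ α, ∀ p k, N.read p a = some k → M p = k

inductive Reach (N : PTRNet P A) : (P → ℕ) → Prop
  | init : Reach N N.M0
  | step {M : P → ℕ} {α : Multiset A} :
      Reach N M → N.Enabled M α → Reach N (N.toPTNet.fire M α)

end PTRNet

/-- The concurrent reachability graph of a PTR-net. -/
def PTRCRG {P A : Type*} (N : PTRNet P A) : STS {M : P → ℕ // N.Reach M} A where
  T := N.T
  tr M α M' := N.Enabled M.1 α ∧ M'.1 = N.toPTNet.fire M.1 α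
  init := ⟨N.M0, PTRNet.Reach.init⟩

namespace StmtAux

open STS PTNet

/-- A realization of a step transition system by a PT-net via a marking map. -/
structure Real {S A : Type*} (Z : STS S A) (P : Type*) where
  N : PTNet P A
  mark : S → P → ℕ
  hinit : mark Z.init = N.M0
  hT : Z.T = N.T
  hinj : Function.Injective mark
  hsound : ∀ s (α : Multiset A) s', Z.tr s α s' →
    N.Enabled (mark s) α ∧ mark s' = N.fire (mark s) α
  hcomplete : ∀ s (α : Multiset A), N.Enabled (mark s) α →
    ∃ s', Z.tr s α s' ∧ mark s' = N.fire (mark s) α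

variable {S A P : Type*}

/-- Extract a realization from an isomorphism with a CRG. -/
noncomputable def Real.ofIso {Z : STS S A} {N : PTNet P A}
    (h : STS.IsoSTS Z (CRG N)) : Real Z P := by
  choose e he0 heT htr using h
  refine ⟨N, fun s => (e s).1, ?_, heT, ?_, ?_, ?_⟩
  · show (e Z.init).1 = N.M0
    rw [he0]; rfl
  · intro s s' hss'
    have : e s = e s' := Subtype.ext hss'
    exact e.injective this
  · intro s α s' hz
    have := (htr s α s').1 hz
    exact ⟨this.1, this.2⟩
  · intro s α hE
    have hE' : N.Enabled (e s).1 α := hE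
    have hR : N.Reach (N.fire (e s).1 α) := (e s).2.step hE'
    refine ⟨e.symm ⟨_, hR⟩, ?_, ?_⟩
    · refine (htr s α _).2 ?_
      refine ⟨hE', ?_⟩
      show (e (e.symm ⟨_, hR⟩)).1 = _
      rw [e.apply_symm_apply]
    · show (e (e.symm ⟨_, hR⟩)).1 = _
      rw [e.apply_symm_apply]

/-- Build an isomorphism with the CRG from a realization, given reachability. -/
noncomputable def Real.toIso {Z : STS S A} (R : Real Z P)
    (hrea : ∀ s, Z.ReachFrom Z.init s) : STS.IsoSTS Z (CRG R.N) := by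
  have hreach : ∀ s, R.N.Reach (R.mark s) := by
    intro s
    induction hrea s with
    | refl => exact R.hinit ▸ PTNet.Reach.init
    | step h htr ih =>
        rename_i r α r'
        have h2 := R.hsound _ _ _ htr
        rw [h2.2]
        exact PTNet.Reach.step ih h2.1
  have hbij : Function.Bijective (fun s => (⟨R.mark s, hreach s⟩ :
      {M : P → ℕ // R.N.Reach M})) := by
    constructor
    · intro s s' h
      exact R.hinj (congrArg Subtype.val h)
    · rintro ⟨M, hM⟩
      induction hM with
      | init => exact ⟨Z.init, Subtype.ext R.hinit⟩
      | step hM hE ih =>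
          rename_i M₀ α
          obtain ⟨s, hs⟩ := ih
          have hsM : R.mark s = M₀ := congrArg Subtype.val hs
          obtain ⟨s', _, hf⟩ := R.hcomplete s α (hsM ▸ hE)
          refine ⟨s', Subtype.ext ?_⟩
          show R.mark s' = R.N.fire M₀ α
          rw [hf, hsM]
  refine ⟨Equiv.ofBijective _ hbij, ?_, R.hT, ?_⟩
  · exact Subtype.ext R.hinit
  · intro s α s'
    constructor
    · intro hz
      have h2 := R.hsound _ _ _ hz
      exact ⟨h2.1, h2.2⟩
    · rintro ⟨hE, hf⟩
      have hE' : R.N.Enabled (R.mark s) α := hE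
      obtain ⟨s'', hz, hf'⟩ := R.hcomplete s α hE'
      have : R.mark s'' = R.mark s' := by
        rw [hf']
        exact (by exact hf : R.mark s' = R.N.fire (R.mark s) α).symm
      rwa [R.hinj this] at hz

/-- Transport a realization along a place bijection, to conclude solvability. -/
theorem Real.solvable {Z : STS S A} [Fintype P] (R : Real Z P)
    (hrea : ∀ s, Z.ReachFrom Z.init s) : STSSolvable Z := by
  classical
  obtain ⟨k, e⟩ : ∃ k, Nonempty (P ≃ Fin k) := ⟨Fintype.card P, ⟨Fintype.equivFin P⟩⟩
  obtain ⟨e⟩ := e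
  set N := R.N with hN
  have hprepos : ∀ a ∈ N.T, ∃ i : Fin k, 0 < N.pre (e.symm i) a := by
    intro a ha
    obtain ⟨p, hp⟩ := N.pre_pos a ha
    exact ⟨e p, by simpa using hp⟩
  set N₂ : PTNet (Fin k) A :=
    ⟨N.T, fun i a => N.pre (e.symm i) a, fun a i => N.post a (e.symm i),
     fun i => N.M0 (e.symm i), hprepos⟩ with hN₂
  have hPRE : ∀ (α : Multiset A) (i : Fin k), N₂.PRE α i = N.PRE α (e.symm i) := by
    intro α i; rfl
  have hPOST : ∀ (α : Multiset A) (i : Fin k), N₂.POST α i = N.POST α (e.symm i) := by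
    intro α i; rfl
  have hEn : ∀ (M : P → ℕ) (α : Multiset A),
      N.Enabled M α ↔ N₂.Enabled (fun i => M (e.symm i)) α := by
    intro M α
    constructor
    · rintro ⟨h1, h2⟩
      exact ⟨h1, fun i => by rw [hPRE]; exact h2 _⟩
    · rintro ⟨h1, h2⟩
      refine ⟨h1, fun p => ?_⟩
      have := h2 (e p)
      rw [hPRE] at this
      simpa using this
  have hfire : ∀ (M : P → ℕ) (α : Multiset A),
      N₂.fire (fun i => M (e.symm i)) α = fun i => N.fire M α (e.symm i) := by
    intro M α
    funext i
    simp only [PTNet.fire, hPRE, hPOST]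
  have R₂ : Real Z (Fin k) := by
    refine ⟨N₂, fun s i => R.mark s (e.symm i), ?_, R.hT, ?_, ?_, ?_⟩
    · funext i
      show R.mark Z.init (e.symm i) = N₂.M0 i
      rw [R.hinit]
    · intro s s' h
      refine R.hinj (funext fun p => ?_)
      have := congrFun h (e p)
      simpa using this
    · intro s α s' hz
      obtain ⟨h1, h2⟩ := R.hsound s α s' hz
      refine ⟨(hEn _ _).1 h1, ?_⟩
      rw [hfire]
      funext i
      show R.mark s' (e.symm i) = _
      rw [h2]
    · intro s α hE
      obtain ⟨s', hz, hf⟩ := R.hcomplete s α ((hEn _ _).2 hE)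
      refine ⟨s', hz, ?_⟩
      rw [hfire]
      funext i
      show R.mark s' (e.symm i) = _
      rw [hf]
  exact ⟨k, R₂.N, R₂.toIso hrea⟩

end StmtAux
namespace StmtAux
set_option linter.unusedSectionVars false

section Sums

variable {A : Type*} [DecidableEq A]

lemma sum_map_cast (γ : Multiset A) (f : A → ℕ) :
    ((γ.map f).sum : ℤ) = (γ.map fun c => (f c : ℤ)).sum := by
  push_cast [Multiset.map_map]; rfl

lemma sum_eq_filter (γ : Multiset A) (f : A → ℤ) (p : A → Prop) [DecidablePred p]
    (h0 : ∀ c ∈ γ, ¬ p c → f c = 0) :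
    (γ.map f).sum = ((γ.filter p).map f).sum := by
  conv_lhs => rw [← Multiset.filter_add_not p γ]
  rw [Multiset.map_add, Multiset.sum_add]
  have hz : ((γ.filter (fun a => ¬ p a)).map f).sum = 0 := by
    refine Multiset.sum_eq_zero ?_
    intro x hx
    obtain ⟨c, hc, rfl⟩ := Multiset.mem_map.1 hx
    have hc' := Multiset.mem_filter.1 hc
    exact h0 c hc'.1 hc'.2
  rw [hz, add_zero]

lemma sum_ite_eq_count (γ : Multiset A) (x : A) :
    (γ.map (fun c => if c = x then (1:ℕ) else 0)).sum = γ.count x := by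
  induction γ using Multiset.induction with
  | empty => simp
  | cons a γ ih =>
      simp only [Multiset.map_cons, Multiset.sum_cons, Multiset.count_cons, ih]
      rcases eq_or_ne a x with rfl | h
      · simp [add_comm]
      · simp [h, Ne.symm h]

end Sums

section NetSums

variable {P A : Type*} (N : PTNet P A)

lemma PRE_add (α β : Multiset A) (p : P) : N.PRE (α + β) p = N.PRE α p + N.PRE β p := by
  simp [PTNet.PRE]

lemma POST_add (α β : Multiset A) (p : P) : N.POST (α + β) p = N.POST α p + N.POST β p := by
  simp [PTNet.POST]

lemma PRE_cons (a : A) (α : Multiset A) (p : P) :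
    N.PRE (a ::ₘ α) p = N.pre p a + N.PRE α p := by
  simp [PTNet.PRE]

lemma POST_cons (a : A) (α : Multiset A) (p : P) :
    N.POST (a ::ₘ α) p = N.post a p + N.POST α p := by
  simp [PTNet.POST]

lemma PRE_zero (p : P) : N.PRE 0 p = 0 := rfl

lemma POST_zero (p : P) : N.POST 0 p = 0 := rfl

lemma PRE_singleton (a : A) (p : P) : N.PRE {a} p = N.pre p a := by
  simp [PTNet.PRE]

lemma POST_singleton (a : A) (p : P) : N.POST {a} p = N.post a p := by
  simp [PTNet.POST]

lemma fire_apply (M : P → ℕ) (α : Multiset A) (p : P) :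
    N.fire M α p = M p - N.PRE α p + N.POST α p := rfl

end NetSums

section Basic

variable {S A : Type*} [DecidableEq A] {X : STS S A} {bar : A → A} {P P' : Type*}

/-- With a net realization, zero steps are loops. -/
lemma zero_loop (RX : Real X P) {s u : S} (h : X.tr s 0 u) : u = s := by
  apply RX.hinj
  rw [(RX.hsound _ _ _ h).2]
  funext p
  rw [fire_apply, PRE_zero, POST_zero]
  omega

/-- SEQ plus determinism-via-the-net: genuine splitting of steps. -/
lemma split (hseq : X.SEQ) (RX : Real X P) {s u : S} {α β : Multiset A}
    (h : X.tr s (α + β) u) : ∃ t, X.tr s α t ∧ X.tr t β u := by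
  obtain ⟨t, h1, w, h2⟩ := hseq s α β ⟨u, h⟩
  suffices hw : w = u by exact ⟨t, h1, hw ▸ h2⟩
  apply RX.hinj
  have e1 := RX.hsound _ _ _ h
  have e2 := RX.hsound _ _ _ h1
  have e3 := RX.hsound _ _ _ h2
  rw [e3.2, e2.2, e1.2]
  funext p
  have hα : RX.N.PRE α p ≤ RX.mark s p := e2.1.2 p
  have hβ : RX.N.PRE β p ≤ RX.N.fire (RX.mark s) α p := by
    have := e3.1.2 p
    rwa [e2.2] at this
  rw [fire_apply] at hβ
  have hαβ := e1.1.2 p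
  rw [PRE_add] at hαβ
  simp only [fire_apply, PRE_add, POST_add]
  omega

lemma split3 (hseq : X.SEQ) (RX : Real X P) {s u : S} {μ₁ μ₂ μ₃ : Multiset A}
    (h : X.tr s (μ₁ + μ₂ + μ₃) u) :
    ∃ t₁ t₂, X.tr s μ₁ t₁ ∧ X.tr t₁ μ₂ t₂ ∧ X.tr t₂ μ₃ u := by
  obtain ⟨t₂, h12, h3⟩ := split hseq RX h
  obtain ⟨t₁, h1, h2⟩ := split hseq RX h12
  exact ⟨t₁, t₂, h1, h2, h3⟩

variable {RX : Real X P} {RY : Real ((X.seqR).revSTS bar) P'}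

/-- Singleton forward steps in the solved sequential reverse. -/
lemma yfwd (RY : Real ((X.seqR).revSTS bar) P') {s t : S} {a : A} (h : X.tr s {a} t) :
    RY.N.Enabled (RY.mark s) {a} ∧ RY.mark t = RY.N.fire (RY.mark s) {a} :=
  RY.hsound s {a} t (Or.inl ⟨h, by simp⟩)

/-- Singleton reverse steps in the solved sequential reverse. -/
lemma yrev (RY : Real ((X.seqR).revSTS bar) P') {s t : S} {a : A} (h : X.tr s {a} t) :
    RY.N.Enabled (RY.mark t) {bar a} ∧ RY.mark s = RY.N.fire (RY.mark t) {bar a} :=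
  RY.hsound t {bar a} s (Or.inr ⟨{a}, by simp, ⟨h, by simp⟩⟩)

/-- Completeness for singleton reverse steps. -/
lemma yrev_complete (hlab : X.LabelsIn) (hfresh : ∀ a ∈ X.T, bar a ∉ X.T)
    (hinjbar : Set.InjOn bar ↑X.T)
    (RY : Real ((X.seqR).revSTS bar) P') {u : S} {a : A} (ha : a ∈ X.T)
    (hE : RY.N.Enabled (RY.mark u) {bar a}) :
    ∃ s, X.tr s {a} u ∧ RY.mark s = RY.N.fire (RY.mark u) {bar a} := by
  obtain ⟨s, hY, hf⟩ := RY.hcomplete u {bar a} hE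
  refine ⟨s, ?_, hf⟩
  rcases hY with hx | ⟨δ, hmap, hδ⟩
  · exact absurd (hlab _ _ _ hx.1 (bar a) (Multiset.mem_singleton_self _))
      (hfresh a ha)
  · obtain ⟨d, rfl⟩ := Multiset.card_eq_one.1
      (by rw [← Multiset.card_map bar δ, ← hmap]; simp)
    have hbd : bar d = bar a := by
      rw [Multiset.map_singleton] at hmap
      exact (Multiset.singleton_inj.1 hmap).symm
    have hd : d ∈ X.T := hlab _ _ _ hδ.1 d (Multiset.mem_singleton_self _)
    have : d = a := hinjbar hd ha hbd
    exact this ▸ hδ.1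

end Basic

end StmtAux
namespace StmtAux
set_option linter.unusedSectionVars false

/-- The (integer) effect of an action on a place. -/
def eff {P A : Type*} (N : PTNet P A) (c : A) (p : P) : ℤ :=
  (N.post c p : ℤ) - N.pre p c

/-- The minimal pre-weight realizing the same effect. -/
def pm {P A : Type*} (N : PTNet P A) (p : P) (c : A) : ℕ :=
  N.pre p c - min (N.pre p c) (N.post c p)

lemma pm_cast {P A : Type*} (N : PTNet P A) (p : P) (c : A) :
    ((pm N p c : ℕ) : ℤ) = max 0 (- eff N c p) := by
  unfold pm eff; omega

lemma sum_map_neg {A : Type*} (s : Multiset A) (f : A → ℤ) :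
    (s.map (fun i => - f i)).sum = - (s.map f).sum := by
  induction s using Multiset.induction with
  | empty => simp
  | cons a s ih => simp [ih]; ring

section Chains

variable {S A : Type*} [DecidableEq A] {X : STS S A} {bar : A → A} {P P' : Type*}
variable (hseq : X.SEQ) (RX : Real X P) (RY : Real ((X.seqR).revSTS bar) P')

/-- Marking change of the second net along a single forward action. -/
lemma stepY {s t : S} {a : A} (h : X.tr s {a} t) (p : P') :
    (RY.mark t p : ℤ) = RY.mark s p + eff RY.N a p ∧
      (RY.N.pre p a : ℤ) ≤ RY.mark s p := by
  have e := yfwd RY h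
  have h1 := e.1.2 p
  rw [PRE_singleton] at h1
  have h2 := congrFun e.2 p
  rw [fire_apply, PRE_singleton, POST_singleton] at h2
  unfold eff
  omega

/-- Marking change of the second net along a single reverse action. -/
lemma stepYrev {s t : S} {a : A} (h : X.tr s {a} t) (p : P') :
    (RY.mark s p : ℤ) = RY.mark t p + eff RY.N (bar a) p ∧
      (RY.N.pre p (bar a) : ℤ) ≤ RY.mark t p := by
  have e := yrev RY h
  have h1 := e.1.2 p
  rw [PRE_singleton] at h1
  have h2 := congrFun e.2 p
  rw [fire_apply, PRE_singleton, POST_singleton] at h2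
  unfold eff
  omega

/-- For occurring actions, the effect of the reverse is the negated effect. -/
lemma occ_eff {s t : S} {b : A} (h : X.tr s {b} t) (p : P') :
    eff RY.N (bar b) p = - eff RY.N b p := by
  have h1 := (stepY RY h p).1
  have h2 := (stepYrev RY h p).1
  omega

include hseq RX in
lemma chainY : ∀ (β : Multiset A) {s u : S}, X.tr s β u → ∀ p : P',
    (RY.mark u p : ℤ) = RY.mark s p + (β.map (fun b => eff RY.N b p)).sum := by
  intro β
  induction β using Multiset.induction with
  | empty =>
      intro s u h p
      rw [zero_loop RX h]
      simp
  | cons a β ih =>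
      intro s u h p
      rw [← Multiset.singleton_add] at h
      obtain ⟨t, h1, h2⟩ := split hseq RX h
      have e1 := (stepY RY h1 p).1
      have e2 := ih h2 p
      rw [Multiset.map_cons, Multiset.sum_cons]
      omega

include hseq RX in
lemma occ_mem {s u : S} {α : Multiset A} {b : A} (h : X.tr s α u) (hb : b ∈ α) :
    ∃ t₁ t₂ : S, X.tr t₁ {b} t₂ := by
  rw [← Multiset.cons_erase hb, ← Multiset.singleton_add] at h
  obtain ⟨t, h1, _⟩ := split hseq RX h
  exact ⟨s, t, h1⟩

include hseq RX in
lemma F2 {u u' : S} {β : Multiset A} (h : X.tr u β u') (p : P') :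
    (β.map (fun c => (pm RY.N p c : ℤ))).sum ≤ RY.mark u p := by
  classical
  set δ := β.filter (fun c => RY.N.post c p < RY.N.pre p c) with hδ
  have hsum : (β.map (fun c => (pm RY.N p c : ℤ))).sum
      = (δ.map (fun c => (pm RY.N p c : ℤ))).sum := by
    refine sum_eq_filter β _ _ ?_
    intro c _ hc
    push_neg at hc
    have := pm_cast RY.N p c
    unfold eff at this
    omega
  have hβeq : δ + β.filter (fun c => ¬ RY.N.post c p < RY.N.pre p c) = β :=
    Multiset.filter_add_not _ β
  rw [← hβeq] at h
  obtain ⟨t, h1, _⟩ := split hseq RX h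
  have e1 := chainY hseq RX RY δ h1 p
  have hcong : (δ.map (fun b => eff RY.N b p)).sum
      = - (δ.map (fun c => (pm RY.N p c : ℤ))).sum := by
    rw [← sum_map_neg]
    refine congrArg Multiset.sum (Multiset.map_congr rfl ?_)
    intro c hc
    have hcp : RY.N.post c p < RY.N.pre p c := (Multiset.mem_filter.1 hc).2
    have := pm_cast RY.N p c
    unfold eff at this ⊢
    omega
  rw [hcong] at e1
  have : (0 : ℤ) ≤ RY.mark t p := Int.natCast_nonneg _
  omega

include hseq RX in
lemma R2 {s u : S} {α : Multiset A} (h : X.tr s α u) (p : P') :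
    (α.map (fun b => (pm RY.N p (bar b) : ℤ))).sum ≤ RY.mark u p := by
  classical
  set δ := α.filter (fun b => RY.N.post (bar b) p < RY.N.pre p (bar b)) with hδ
  have hsum : (α.map (fun b => (pm RY.N p (bar b) : ℤ))).sum
      = (δ.map (fun b => (pm RY.N p (bar b) : ℤ))).sum := by
    refine sum_eq_filter α _ _ ?_
    intro c _ hc
    push_neg at hc
    have := pm_cast RY.N p (bar c)
    unfold eff at this
    omega
  have hαeq : α.filter (fun b => ¬ RY.N.post (bar b) p < RY.N.pre p (bar b)) + δ = α := by
    rw [add_comm]; exact Multiset.filter_add_not _ α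
  rw [← hαeq] at h
  obtain ⟨t, _, h2⟩ := split hseq RX h
  have e1 := chainY hseq RX RY δ h2 p
  have hcong : (δ.map (fun b => eff RY.N b p)).sum
      = (δ.map (fun b => (pm RY.N p (bar b) : ℤ))).sum := by
    refine congrArg Multiset.sum (Multiset.map_congr rfl ?_)
    intro c hc
    have hcp : RY.N.post (bar c) p < RY.N.pre p (bar c) := (Multiset.mem_filter.1 hc).2
    obtain ⟨t₁, t₂, ht⟩ := occ_mem hseq RX h2 hc
    have hocc := occ_eff RY ht p
    have := pm_cast RY.N p (bar c)
    unfold eff at this hocc ⊢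
    omega
  rw [hcong] at e1
  have : (0 : ℤ) ≤ RY.mark t p := Int.natCast_nonneg _
  omega

include hseq RX in
lemma R1 {s u : S} {α : Multiset A} {a : A} (h : X.tr s α u) (ha : a ∈ α) (p : P') :
    (RY.N.pre p (bar a) : ℤ)
      + ((α.erase a).map (fun b => (pm RY.N p (bar b) : ℤ))).sum ≤ RY.mark u p := by
  classical
  set α₂ := α.erase a with hα₂
  set δ := α₂.filter (fun b => RY.N.post (bar b) p < RY.N.pre p (bar b)) with hδ
  set ρ := α₂.filter (fun b => ¬ RY.N.post (bar b) p < RY.N.pre p (bar b)) with hρ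
  have hsum : (α₂.map (fun b => (pm RY.N p (bar b) : ℤ))).sum
      = (δ.map (fun b => (pm RY.N p (bar b) : ℤ))).sum := by
    refine sum_eq_filter α₂ _ _ ?_
    intro c _ hc
    push_neg at hc
    have := pm_cast RY.N p (bar c)
    unfold eff at this
    omega
  have hδρ : δ + ρ = α₂ := Multiset.filter_add_not _ α₂
  have hαeq : (ρ + {a}) + δ = α := by
    have h2 : {a} + α₂ = α := by
      rw [Multiset.singleton_add, hα₂, Multiset.cons_erase ha]
    rw [← h2, ← hδρ]; abel
  rw [← hαeq] at h
  obtain ⟨t₁, t₂, _, hmid, hlast⟩ := split3 hseq RX h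
  have e2 := stepYrev RY hmid p
  have e3 := chainY hseq RX RY δ hlast p
  have hcong : (δ.map (fun b => eff RY.N b p)).sum
      = (δ.map (fun b => (pm RY.N p (bar b) : ℤ))).sum := by
    refine congrArg Multiset.sum (Multiset.map_congr rfl ?_)
    intro c hc
    have hcp : RY.N.post (bar c) p < RY.N.pre p (bar c) := (Multiset.mem_filter.1 hc).2
    obtain ⟨s₁, s₂, ht⟩ := occ_mem hseq RX hlast hc
    have hocc := occ_eff RY ht p
    have := pm_cast RY.N p (bar c)
    unfold eff at this hocc ⊢
    omega
  rw [hcong] at e3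
  rw [← hα₂] at *
  omega

end Chains

end StmtAux
namespace StmtAux
set_option linter.unusedSectionVars false

/-- The minimal post-weight realizing the same effect. -/
def qm {P A : Type*} (N : PTNet P A) (p : P) (c : A) : ℕ :=
  N.post c p - min (N.pre p c) (N.post c p)

lemma qm_cast {P A : Type*} (N : PTNet P A) (p : P) (c : A) :
    ((qm N p c : ℕ) : ℤ) = max 0 (eff N c p) := by
  unfold qm eff; omega

lemma qm_sub_pm {P A : Type*} (N : PTNet P A) (p : P) (c : A) :
    ((qm N p c : ℕ) : ℤ) - (pm N p c : ℕ) = eff N c p := by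
  unfold qm pm eff; omega

section Net

variable {S A : Type*} [DecidableEq A] (X : STS S A) (bar : A → A)
variable {P P' : Type*}

/-- Pick the action whose reverse is `c`, if any. -/
noncomputable def unbar (c : A) : A :=
  letI := Classical.dec (∃ b ∈ X.T, bar b = c)
  if h : ∃ b ∈ X.T, bar b = c then h.choose else c

lemma unbar_spec {c : A} (hc : c ∈ X.T.image bar) :
    unbar X bar c ∈ X.T ∧ bar (unbar X bar c) = c := by
  obtain ⟨b, hb, rfl⟩ := Finset.mem_image.1 hc
  have h : ∃ b' ∈ X.T, bar b' = bar b := ⟨b, hb, rfl⟩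
  unfold unbar
  rw [dif_pos h]
  exact ⟨h.choose_spec.1, h.choose_spec.2⟩

lemma unbar_bar (hinjbar : Set.InjOn bar ↑X.T) {b : A} (hb : b ∈ X.T) :
    unbar X bar (bar b) = b := by
  have hc : bar b ∈ X.T.image bar := Finset.mem_image_of_mem bar hb
  have h := unbar_spec X bar hc
  exact hinjbar h.1 hb h.2

/-- The place type of the synthesized net. -/
abbrev PZ : Type _ :=
  P ⊕ ((P' × {a : A // a ∈ X.T}) ⊕ ({a : A // a ∈ X.T} × {a : A // a ∈ X.T}))

variable (NN : PTNet P A) (NP : PTNet P' A)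

/-- Pre-weights of the synthesized net. -/
noncomputable def preZ : PZ X (P := P) (P' := P') → A → ℕ
  | Sum.inl q, c => if c ∈ X.T then NN.pre q c else NN.post (unbar X bar c) q
  | Sum.inr (Sum.inl (p, a)), c => if c = bar a.1 then NP.pre p c else pm NP p c
  | Sum.inr (Sum.inr (x, y)), c =>
      (if c = x.1 then 1 else 0) + (if c = bar y.1 then 1 else 0)

/-- Post-weights of the synthesized net. -/
noncomputable def postZ : A → PZ X (P := P) (P' := P') → ℕ := fun c pl =>
  match pl with
  | Sum.inl q => if c ∈ X.T then NN.post c q else NN.pre q (unbar X bar c)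
  | Sum.inr (Sum.inl (p, a)) => if c = bar a.1 then NP.post c p else qm NP p c
  | Sum.inr (Sum.inr (x, y)) =>
      (if c = x.1 then 1 else 0) + (if c = bar y.1 then 1 else 0)

/-- The marking map of the synthesized net. -/
def markZ (mX : S → P → ℕ) (mY : S → P' → ℕ) (u : S) : PZ X (P := P) (P' := P') → ℕ :=
  fun pl => match pl with
  | Sum.inl q => mX u q
  | Sum.inr (Sum.inl (p, _)) => mY u p
  | Sum.inr (Sum.inr _) => 1

/-- The synthesized net. -/
noncomputable def NZ (mX : S → P → ℕ) (mY : S → P' → ℕ) :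
    PTNet (PZ X (P := P) (P' := P')) A where
  T := STS.revT X bar
  pre := preZ X bar NN NP
  post := postZ X bar NN NP
  M0 := markZ X mX mY X.init
  pre_pos := by
    intro c hcT
    rcases Finset.mem_union.1 hcT with h | h
    · refine ⟨Sum.inr (Sum.inr (⟨c, h⟩, ⟨c, h⟩)), ?_⟩
      simp [preZ]
    · obtain ⟨y, hy, rfl⟩ := Finset.mem_image.1 h
      refine ⟨Sum.inr (Sum.inr (⟨y, hy⟩, ⟨y, hy⟩)), ?_⟩
      simp [preZ]

variable {mX : S → P → ℕ} {mY : S → P' → ℕ}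

lemma PREZ_inl (γ : Multiset A) (q : P) :
    (NZ X bar NN NP mX mY).PRE γ (Sum.inl q)
      = (γ.map (fun c => if c ∈ X.T then NN.pre q c
          else NN.post (unbar X bar c) q)).sum := rfl

lemma POSTZ_inl (γ : Multiset A) (q : P) :
    (NZ X bar NN NP mX mY).POST γ (Sum.inl q)
      = (γ.map (fun c => if c ∈ X.T then NN.post c q
          else NN.pre q (unbar X bar c))).sum := rfl

lemma PREZ_copy (γ : Multiset A) (p : P') (a : {a : A // a ∈ X.T}) :
    (NZ X bar NN NP mX mY).PRE γ (Sum.inr (Sum.inl (p, a)))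
      = (γ.map (fun c => if c = bar a.1 then NP.pre p c else pm NP p c)).sum := rfl

lemma POSTZ_copy (γ : Multiset A) (p : P') (a : {a : A // a ∈ X.T}) :
    (NZ X bar NN NP mX mY).POST γ (Sum.inr (Sum.inl (p, a)))
      = (γ.map (fun c => if c = bar a.1 then NP.post c p else qm NP p c)).sum := rfl

lemma PREZ_kill (γ : Multiset A) (x y : {a : A // a ∈ X.T}) :
    (NZ X bar NN NP mX mY).PRE γ (Sum.inr (Sum.inr (x, y)))
      = γ.count x.1 + γ.count (bar y.1) := by
  show (γ.map (fun c => (if c = x.1 then 1 else 0) + (if c = bar y.1 then 1 else 0))).sum = _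
  rw [Multiset.sum_map_add]
  rw [sum_ite_eq_count, sum_ite_eq_count]

lemma POSTZ_kill (γ : Multiset A) (x y : {a : A // a ∈ X.T}) :
    (NZ X bar NN NP mX mY).POST γ (Sum.inr (Sum.inr (x, y)))
      = γ.count x.1 + γ.count (bar y.1) := by
  show (γ.map (fun c => (if c = x.1 then 1 else 0) + (if c = bar y.1 then 1 else 0))).sum = _
  rw [Multiset.sum_map_add]
  rw [sum_ite_eq_count, sum_ite_eq_count]

end Net

end StmtAux
namespace StmtAux
set_option linter.unusedSectionVars false

section Sound

variable {S A : Type*} [DecidableEq A] {X : STS S A} {bar : A → A} {P P' : Type*}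
variable (RX : Real X P) (RY : Real ((X.seqR).revSTS bar) P')
variable (hlab : X.LabelsIn) (hseq : X.SEQ)
variable (hset : ∀ s (α : Multiset A) s', X.tr s α s' → α.Nodup)
variable (hinjbar : Set.InjOn bar ↑X.T) (hfresh : ∀ a ∈ X.T, bar a ∉ X.T)

lemma sum_map_sub {A : Type*} (s : Multiset A) (f g : A → ℤ) :
    (s.map (fun c => f c - g c)).sum = (s.map f).sum - (s.map g).sum := by
  induction s using Multiset.induction with
  | empty => simp
  | cons a s ih => simp only [Multiset.map_cons, Multiset.sum_cons, ih]; ring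

include RX RY hlab hseq hset hfresh in
lemma sound_fwd {s s' : S} {γ : Multiset A} (hx : X.tr s γ s') :
    (NZ X bar RX.N RY.N RX.mark RY.mark).Enabled
        (markZ X RX.mark RY.mark s) γ ∧
      markZ X RX.mark RY.mark s' =
        (NZ X bar RX.N RY.N RX.mark RY.mark).fire (markZ X RX.mark RY.mark s) γ := by
  have hmemT : ∀ c ∈ γ, c ∈ X.T := hlab _ _ _ hx
  have hnd : γ.Nodup := hset _ _ _ hx
  have hEX := RX.hsound _ _ _ hx
  -- at N-places the pre/post weights agree with those of the first net
  have hpre_inl : ∀ q : P,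
      (NZ X bar RX.N RY.N RX.mark RY.mark).PRE γ (Sum.inl q) = RX.N.PRE γ q := by
    intro q
    rw [PREZ_inl]
    exact congrArg Multiset.sum (Multiset.map_congr rfl fun c hc => if_pos (hmemT c hc))
  have hpost_inl : ∀ q : P,
      (NZ X bar RX.N RY.N RX.mark RY.mark).POST γ (Sum.inl q) = RX.N.POST γ q := by
    intro q
    rw [POSTZ_inl]
    exact congrArg Multiset.sum (Multiset.map_congr rfl fun c hc => if_pos (hmemT c hc))
  -- at copy places the weights are the minimized ones
  have hne : ∀ (a : {a : A // a ∈ X.T}), ∀ c ∈ γ, ¬ c = bar a.1 := by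
    intro a c hc h
    exact hfresh a.1 a.2 (h ▸ hmemT c hc)
  have hpre_copy : ∀ (p : P') (a : {a : A // a ∈ X.T}),
      (NZ X bar RX.N RY.N RX.mark RY.mark).PRE γ (Sum.inr (Sum.inl (p, a)))
        = (γ.map (pm RY.N p)).sum := by
    intro p a
    rw [PREZ_copy]
    exact congrArg Multiset.sum (Multiset.map_congr rfl fun c hc => if_neg (hne a c hc))
  have hpost_copy : ∀ (p : P') (a : {a : A // a ∈ X.T}),
      (NZ X bar RX.N RY.N RX.mark RY.mark).POST γ (Sum.inr (Sum.inl (p, a)))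
        = (γ.map (qm RY.N p)).sum := by
    intro p a
    rw [POSTZ_copy]
    exact congrArg Multiset.sum (Multiset.map_congr rfl fun c hc => if_neg (hne a c hc))
  have hF2 : ∀ p : P', ((γ.map (pm RY.N p)).sum : ℤ) ≤ RY.mark s p := by
    intro p
    rw [sum_map_cast]
    exact F2 hseq RX RY hx p
  -- killer place counts
  have hkill : ∀ (x y : {a : A // a ∈ X.T}),
      (NZ X bar RX.N RY.N RX.mark RY.mark).PRE γ (Sum.inr (Sum.inr (x, y))) ≤ 1 := by
    intro x y
    rw [PREZ_kill]
    have h1 : γ.count x.1 ≤ 1 := Multiset.nodup_iff_count_le_one.1 hnd x.1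
    have h2 : γ.count (bar y.1) = 0 := by
      rw [Multiset.count_eq_zero]
      intro hmem
      exact hfresh y.1 y.2 (hmemT _ hmem)
    omega
  constructor
  · constructor
    · intro c hc
      exact Finset.mem_union_left _ (hmemT c hc)
    · rintro (q | (⟨p, a⟩ | ⟨x, y⟩))
      · rw [hpre_inl]
        exact hEX.1.2 q
      · show _ ≤ RY.mark s p
        rw [hpre_copy]
        exact_mod_cast hF2 p
      · show _ ≤ 1
        exact hkill x y
  · funext pl
    rcases pl with q | (⟨p, a⟩ | ⟨x, y⟩)
    · show RX.mark s' q = _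
      rw [fire_apply, hpre_inl, hpost_inl]
      have := congrFun hEX.2 q
      rw [fire_apply] at this
      exact this
    · show RY.mark s' p = _
      rw [fire_apply, hpre_copy, hpost_copy]
      have hch := chainY hseq RX RY γ hx p
      have hsumeff : (γ.map (fun b => eff RY.N b p)).sum
          = ((γ.map (qm RY.N p)).sum : ℤ) - ((γ.map (pm RY.N p)).sum : ℤ) := by
        rw [sum_map_cast, sum_map_cast]
        have h1 : (γ.map (fun b => eff RY.N b p)).sum
            = (γ.map (fun c => ((qm RY.N p c : ℕ) : ℤ) - ((pm RY.N p c : ℕ) : ℤ))).sum := by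
          refine congrArg Multiset.sum (Multiset.map_congr rfl ?_)
          intro c _
          rw [qm_sub_pm]
        rw [h1, sum_map_sub]
      have hb := hF2 p
      show RY.mark s' p = RY.mark s p - (γ.map (pm RY.N p)).sum + (γ.map (qm RY.N p)).sum
      omega
    · have hm1 : markZ X RX.mark RY.mark s' (Sum.inr (Sum.inr (x, y))) = 1 := rfl
      have hm2 : markZ X RX.mark RY.mark s (Sum.inr (Sum.inr (x, y))) = 1 := rfl
      rw [fire_apply, hm1, hm2, PREZ_kill, POSTZ_kill]
      have := hkill x y
      rw [PREZ_kill] at this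
      omega

end Sound

end StmtAux
namespace StmtAux
set_option linter.unusedSectionVars false

section SoundRev

variable {S A : Type*} [DecidableEq A] {X : STS S A} {bar : A → A} {P P' : Type*}
variable (RX : Real X P) (RY : Real ((X.seqR).revSTS bar) P')
variable (hlab : X.LabelsIn) (hseq : X.SEQ)
variable (hset : ∀ s (α : Multiset A) s', X.tr s α s' → α.Nodup)
variable (hinjbar : Set.InjOn bar ↑X.T) (hfresh : ∀ a ∈ X.T, bar a ∉ X.T)

include RX RY hlab hseq hset hinjbar hfresh in
lemma sound_rev {u w : S} {α : Multiset A} (hx : X.tr w α u) :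
    (NZ X bar RX.N RY.N RX.mark RY.mark).Enabled
        (markZ X RX.mark RY.mark u) (α.map bar) ∧
      markZ X RX.mark RY.mark w =
        (NZ X bar RX.N RY.N RX.mark RY.mark).fire
          (markZ X RX.mark RY.mark u) (α.map bar) := by
  have hmemT : ∀ b ∈ α, b ∈ X.T := hlab _ _ _ hx
  have hndα : α.Nodup := hset _ _ _ hx
  have hndγ : (α.map bar).Nodup :=
    Multiset.Nodup.map_on
      (fun x hxm y hym h => hinjbar (hmemT x hxm) (hmemT y hym) h) hndα
  have hEX := RX.hsound _ _ _ hx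
  -- N-places: reversed weights
  have hpre_inl : ∀ q : P,
      (NZ X bar RX.N RY.N RX.mark RY.mark).PRE (α.map bar) (Sum.inl q)
        = RX.N.POST α q := by
    intro q
    rw [PREZ_inl, Multiset.map_map]
    refine congrArg Multiset.sum (Multiset.map_congr rfl ?_)
    intro b hb
    show (if bar b ∈ X.T then _ else _) = _
    rw [if_neg (hfresh b (hmemT b hb)), unbar_bar X bar hinjbar (hmemT b hb)]
  have hpost_inl : ∀ q : P,
      (NZ X bar RX.N RY.N RX.mark RY.mark).POST (α.map bar) (Sum.inl q)
        = RX.N.PRE α q := by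
    intro q
    rw [POSTZ_inl, Multiset.map_map]
    refine congrArg Multiset.sum (Multiset.map_congr rfl ?_)
    intro b hb
    show (if bar b ∈ X.T then _ else _) = _
    rw [if_neg (hfresh b (hmemT b hb)), unbar_bar X bar hinjbar (hmemT b hb)]
  -- copy places
  have hbarne : ∀ (a : {a : A // a ∈ X.T}), ∀ b ∈ α, b ≠ a.1 → bar b ≠ bar a.1 := by
    intro a b hb hne h
    exact hne (hinjbar (hmemT b hb) a.2 h)
  have hpre_copy : ∀ (p : P') (a : {a : A // a ∈ X.T}),
      (NZ X bar RX.N RY.N RX.mark RY.mark).PRE (α.map bar) (Sum.inr (Sum.inl (p, a)))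
        = (α.map (fun b => if b = a.1 then RY.N.pre p (bar a.1)
            else pm RY.N p (bar b))).sum := by
    intro p a
    rw [PREZ_copy, Multiset.map_map]
    refine congrArg Multiset.sum (Multiset.map_congr rfl ?_)
    intro b hb
    show (if bar b = bar a.1 then RY.N.pre p (bar b) else pm RY.N p (bar b)) = _
    rcases eq_or_ne b a.1 with rfl | hne
    · rw [if_pos rfl, if_pos rfl]
    · rw [if_neg (hbarne a b hb hne), if_neg hne]
  have hpost_copy : ∀ (p : P') (a : {a : A // a ∈ X.T}),
      (NZ X bar RX.N RY.N RX.mark RY.mark).POST (α.map bar) (Sum.inr (Sum.inl (p, a)))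
        = (α.map (fun b => if b = a.1 then RY.N.post (bar a.1) p
            else qm RY.N p (bar b))).sum := by
    intro p a
    rw [POSTZ_copy, Multiset.map_map]
    refine congrArg Multiset.sum (Multiset.map_congr rfl ?_)
    intro b hb
    show (if bar b = bar a.1 then RY.N.post (bar b) p else qm RY.N p (bar b)) = _
    rcases eq_or_ne b a.1 with rfl | hne
    · rw [if_pos rfl, if_pos rfl]
    · rw [if_neg (hbarne a b hb hne), if_neg hne]
  -- bound for the copy-place pre-sums
  have hpre_copy_le : ∀ (p : P') (a : {a : A // a ∈ X.T}),
      ((α.map (fun b => if b = a.1 then RY.N.pre p (bar a.1)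
          else pm RY.N p (bar b))).sum : ℤ) ≤ RY.mark u p := by
    intro p a
    rw [sum_map_cast]
    by_cases hmem : a.1 ∈ α
    · have hsplit : (α.map (fun b => ((if b = a.1 then RY.N.pre p (bar a.1)
          else pm RY.N p (bar b) : ℕ) : ℤ))).sum
          = (RY.N.pre p (bar a.1) : ℤ)
            + ((α.erase a.1).map (fun b => (pm RY.N p (bar b) : ℤ))).sum := by
        conv_lhs => rw [← Multiset.cons_erase hmem]
        rw [Multiset.map_cons, Multiset.sum_cons, if_pos rfl]
        congr 1
        refine congrArg Multiset.sum (Multiset.map_congr rfl ?_)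
        intro b hb
        rw [if_neg ((hndα.mem_erase_iff.1 hb).1)]
      rw [hsplit]
      exact R1 hseq RX RY hx hmem p
    · have hsplit : (α.map (fun b => ((if b = a.1 then RY.N.pre p (bar a.1)
          else pm RY.N p (bar b) : ℕ) : ℤ))).sum
          = (α.map (fun b => (pm RY.N p (bar b) : ℤ))).sum := by
        refine congrArg Multiset.sum (Multiset.map_congr rfl ?_)
        intro b hb
        rw [if_neg (fun h : b = a.1 => hmem (h ▸ hb))]
      rw [hsplit]
      exact R2 hseq RX RY hx p
  -- killer places
  have hkill : ∀ (x y : {a : A // a ∈ X.T}),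
      (NZ X bar RX.N RY.N RX.mark RY.mark).PRE (α.map bar)
        (Sum.inr (Sum.inr (x, y))) ≤ 1 := by
    intro x y
    rw [PREZ_kill]
    have h1 : (α.map bar).count x.1 = 0 := by
      rw [Multiset.count_eq_zero]
      intro hmem
      obtain ⟨b, hb, hbx⟩ := Multiset.mem_map.1 hmem
      exact hfresh b (hmemT b hb) (hbx ▸ x.2)
    have h2 : (α.map bar).count (bar y.1) ≤ 1 :=
      Multiset.nodup_iff_count_le_one.1 hndγ _
    omega
  constructor
  · constructor
    · intro c hc
      obtain ⟨b, hb, rfl⟩ := Multiset.mem_map.1 hc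
      exact Finset.mem_union_right _ (Finset.mem_image_of_mem bar (hmemT b hb))
    · rintro (q | (⟨p, a⟩ | ⟨x, y⟩))
      · rw [hpre_inl]
        show _ ≤ RX.mark u q
        have h1 := congrFun hEX.2 q
        rw [fire_apply] at h1
        have h2 := hEX.1.2 q
        omega
      · show _ ≤ RY.mark u p
        rw [hpre_copy]
        exact_mod_cast hpre_copy_le p a
      · show _ ≤ 1
        exact hkill x y
  · funext pl
    rcases pl with q | (⟨p, a⟩ | ⟨x, y⟩)
    · show RX.mark w q = _
      have hmq : markZ X RX.mark RY.mark u (Sum.inl q) = RX.mark u q := rfl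
      rw [fire_apply, hpre_inl, hpost_inl, hmq]
      have h1 := congrFun hEX.2 q
      rw [fire_apply] at h1
      have h2 := hEX.1.2 q
      omega
    · show RY.mark w p = _
      have hmp : markZ X RX.mark RY.mark u (Sum.inr (Sum.inl (p, a))) = RY.mark u p := rfl
      rw [fire_apply, hpre_copy, hpost_copy, hmp]
      have hch := chainY hseq RX RY α hx p
      have hocc : ∀ b ∈ α, eff RY.N (bar b) p = - eff RY.N b p := by
        intro b hb
        obtain ⟨t₁, t₂, ht⟩ := occ_mem hseq RX hx hb
        exact occ_eff RY ht p
      have hsumocc : (α.map (fun b => eff RY.N (bar b) p)).sum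
          = - (α.map (fun b => eff RY.N b p)).sum := by
        rw [← sum_map_neg]
        exact congrArg Multiset.sum (Multiset.map_congr rfl hocc)
      have hsumeff :
          ((α.map (fun b => if b = a.1 then RY.N.post (bar a.1) p
              else qm RY.N p (bar b))).sum : ℤ)
            - ((α.map (fun b => if b = a.1 then RY.N.pre p (bar a.1)
              else pm RY.N p (bar b))).sum : ℤ)
          = (α.map (fun b => eff RY.N (bar b) p)).sum := by
        rw [sum_map_cast, sum_map_cast, ← sum_map_sub]
        refine congrArg Multiset.sum (Multiset.map_congr rfl ?_)
        intro b _
        rcases eq_or_ne b a.1 with rfl | hne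
        · rw [if_pos rfl, if_pos rfl]
          unfold eff
          ring
        · rw [if_neg hne, if_neg hne]
          exact qm_sub_pm RY.N p (bar b)
      have hb := hpre_copy_le p a
      omega
    · have hm1 : markZ X RX.mark RY.mark w (Sum.inr (Sum.inr (x, y))) = 1 := rfl
      have hm2 : markZ X RX.mark RY.mark u (Sum.inr (Sum.inr (x, y))) = 1 := rfl
      rw [fire_apply, hm1, hm2, PREZ_kill, POSTZ_kill]
      have := hkill x y
      rw [PREZ_kill] at this
      omega

end SoundRev

end StmtAux
namespace StmtAux
set_option linter.unusedSectionVars false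

section Complete

variable {S A : Type*} [DecidableEq A] {X : STS S A} {bar : A → A} {P P' : Type*}
variable (RX : Real X P) (RY : Real ((X.seqR).revSTS bar) P')
variable (hlab : X.LabelsIn) (hseq : X.SEQ) (hel : X.EL)
variable (hset : ∀ s (α : Multiset A) s', X.tr s α s' → α.Nodup)
variable (hinjbar : Set.InjOn bar ↑X.T) (hfresh : ∀ a ∈ X.T, bar a ∉ X.T)

include RX RY hlab hel hinjbar hfresh in
/-- Gluing: if all local reverse-enabling constraints hold at `u`, the whole
multiset of reverses is a genuine reverse step at `u`. -/
lemma glue : ∀ (γ : Multiset A) (u : S),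
    (∀ c ∈ γ, c ∈ X.T.image bar) → γ.Nodup →
    (∀ q : P, (γ.map (fun c => RX.N.post (unbar X bar c) q)).sum ≤ RX.mark u q) →
    (∀ (p : P') (c : A), c ∈ γ →
        RY.N.pre p c + ((γ.erase c).map (pm RY.N p)).sum ≤ RY.mark u p) →
    ∃ w, X.tr w (γ.map (unbar X bar)) u := by
  intro γ
  induction γ using Multiset.induction with
  | empty =>
      intro u _ _ _ _
      exact ⟨u, by simpa using hel u⟩
  | cons c γ' ih =>
      intro u hmem hnd hQ hC
      have hcim : c ∈ X.T.image bar := hmem c (Multiset.mem_cons_self c γ')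
      obtain ⟨ha, hbar⟩ := unbar_spec X bar hcim
      set b := unbar X bar c with hbdef
      have hcγ' : c ∉ γ' := (Multiset.nodup_cons.1 hnd).1
      have hnd' : γ'.Nodup := (Multiset.nodup_cons.1 hnd).2
      -- the singleton reverse is enabled in the second net
      have hmem' : ∀ d ∈ γ', d ∈ X.T.image bar :=
        fun d hd => hmem d (Multiset.mem_cons_of_mem hd)
      have hEc : RY.N.Enabled (RY.mark u) {bar b} := by
        rw [hbar]
        constructor
        · intro d hd
          rw [Multiset.mem_singleton.1 hd, ← RY.hT]
          exact Finset.mem_union_right _ hcim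
        · intro p
          rw [PRE_singleton]
          have := hC p c (Multiset.mem_cons_self c γ')
          omega
      obtain ⟨sa, hsa, hfs⟩ := yrev_complete hlab hfresh hinjbar RY ha hEc
      rw [hbar] at hfs
      -- marking relations for the singleton step
      have hEsa := RX.hsound _ _ _ hsa
      have hMXu : ∀ q, RX.N.pre q b ≤ RX.mark sa q ∧
          RX.mark u q = RX.mark sa q - RX.N.pre q b + RX.N.post b q := by
        intro q
        have h1 := hEsa.1.2 q
        have h2 := congrFun hEsa.2 q
        rw [PRE_singleton] at h1
        rw [fire_apply, PRE_singleton, POST_singleton] at h2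
        exact ⟨h1, h2⟩
      have hMYsa : ∀ p, RY.N.pre p c ≤ RY.mark u p ∧
          RY.mark sa p = RY.mark u p - RY.N.pre p c + RY.N.post c p := by
        intro p
        have h1 := hEc.2 p
        rw [hbar, PRE_singleton] at h1
        have h2 := congrFun hfs p
        rw [fire_apply, PRE_singleton, POST_singleton] at h2
        exact ⟨h1, h2⟩
      -- establish the hypotheses at `sa`
      have hQ' : ∀ q : P, (γ'.map (fun d => RX.N.post (unbar X bar d) q)).sum
          ≤ RX.mark sa q := by
        intro q
        have h0 := hQ q
        rw [Multiset.map_cons, Multiset.sum_cons, ← hbdef] at h0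
        have := hMXu q
        omega
      have hC' : ∀ (p : P') (d : A), d ∈ γ' →
          RY.N.pre p d + ((γ'.erase d).map (pm RY.N p)).sum ≤ RY.mark sa p := by
        intro p d hd
        have hdc : d ≠ c := fun h => hcγ' (h ▸ hd)
        have h0 := hC p d (Multiset.mem_cons_of_mem hd)
        rw [Multiset.erase_cons_tail _ (Ne.symm hdc), Multiset.map_cons, Multiset.sum_cons] at h0
        have h1 := hMYsa p
        have h2 : pm RY.N p c = RY.N.pre p c - min (RY.N.pre p c) (RY.N.post c p) := rfl
        omega
      obtain ⟨w, hw⟩ := ih sa hmem' hnd' hQ' hC'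
      -- now the full step from `w`
      have hEw := RX.hsound _ _ _ hw
      have hPOSTβ : ∀ q, RX.N.POST (γ'.map (unbar X bar)) q
          = (γ'.map (fun d => RX.N.post (unbar X bar d) q)).sum := by
        intro q
        show ((γ'.map (unbar X bar)).map (fun d => RX.N.post d q)).sum = _
        rw [Multiset.map_map]
        rfl
      have hPREβ : ∀ q, RX.N.PRE (γ'.map (unbar X bar)) q ≤ RX.mark w q :=
        fun q => hEw.1.2 q
      have hfw : ∀ q, RX.mark sa q = RX.mark w q
          - RX.N.PRE (γ'.map (unbar X bar)) q + RX.N.POST (γ'.map (unbar X bar)) q := by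
        intro q
        have := congrFun hEw.2 q
        rwa [fire_apply] at this
      have hEn : RX.N.Enabled (RX.mark w) (b ::ₘ γ'.map (unbar X bar)) := by
        constructor
        · intro d hd
          rcases Multiset.mem_cons.1 hd with rfl | hd'
          · exact RX.hT ▸ ha
          · obtain ⟨d₀, hd₀, rfl⟩ := Multiset.mem_map.1 hd'
            exact RX.hT ▸ (unbar_spec X bar (hmem d₀ (Multiset.mem_cons_of_mem hd₀))).1
        · intro q
          rw [PRE_cons]
          have h0 := hQ q
          rw [Multiset.map_cons, Multiset.sum_cons, ← hbdef] at h0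
          have h1 := hMXu q
          have h2 := hfw q
          have h3 := hPREβ q
          have h4 := hPOSTβ q
          omega
      obtain ⟨u'', hxu, hfi⟩ := RX.hcomplete w _ hEn
      have huu : u'' = u := by
        apply RX.hinj
        funext q
        have h5 := congrFun hfi q
        rw [fire_apply, PRE_cons, POST_cons] at h5
        have h0 := hQ q
        rw [Multiset.map_cons, Multiset.sum_cons, ← hbdef] at h0
        have h1 := hMXu q
        have h2 := hfw q
        have h3 := hPREβ q
        have h4 := hPOSTβ q
        omega
      refine ⟨w, ?_⟩
      rw [Multiset.map_cons, ← hbdef]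
      exact huu ▸ hxu

include RX RY hlab hseq hel hset hinjbar hfresh in
lemma completeZ (u : S) (γ : Multiset A)
    (hE : (NZ X bar RX.N RY.N RX.mark RY.mark).Enabled (markZ X RX.mark RY.mark u) γ) :
    ∃ w, (X.revSTS bar).tr u γ w := by
  obtain ⟨hmem, hPRE⟩ := hE
  by_cases hfwd : ∀ c ∈ γ, c ∈ X.T
  · have hEN : RX.N.Enabled (RX.mark u) γ := by
      refine ⟨fun c hc => RX.hT ▸ hfwd c hc, fun q => ?_⟩
      have h0 := hPRE (Sum.inl q)
      rw [PREZ_inl] at h0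
      have heq : (γ.map (fun c => if c ∈ X.T then RX.N.pre q c
          else RX.N.post (unbar X bar c) q)).sum = RX.N.PRE γ q :=
        congrArg Multiset.sum (Multiset.map_congr rfl fun c hc => if_pos (hfwd c hc))
      rw [heq] at h0
      exact h0
    obtain ⟨u', hx, _⟩ := RX.hcomplete u γ hEN
    exact ⟨u', Or.inl hx⟩
  · push_neg at hfwd
    obtain ⟨c₀, hc₀γ, hc₀T⟩ := hfwd
    have hc₀im : c₀ ∈ X.T.image bar := by
      rcases Finset.mem_union.1 (hmem c₀ hc₀γ) with h | h
      · exact absurd h hc₀T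
      · exact h
    obtain ⟨y₀, hy₀, hby₀⟩ := Finset.mem_image.1 hc₀im
    have hrev : ∀ c ∈ γ, c ∉ X.T := by
      intro c hc hcT
      have h0 := hPRE (Sum.inr (Sum.inr (⟨c, hcT⟩, ⟨y₀, hy₀⟩)))
      rw [PREZ_kill] at h0
      have hm : markZ X RX.mark RY.mark u
          (Sum.inr (Sum.inr ((⟨c, hcT⟩ : {a : A // a ∈ X.T}), ⟨y₀, hy₀⟩))) = 1 := rfl
      rw [hm] at h0
      have h0' : γ.count c + γ.count (bar y₀) ≤ 1 := h0
      have h1 : 1 ≤ γ.count c := Multiset.one_le_count_iff_mem.2 hc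
      have h2 : 1 ≤ γ.count (bar y₀) := by
        rw [hby₀]
        exact Multiset.one_le_count_iff_mem.2 hc₀γ
      omega
    have him : ∀ c ∈ γ, c ∈ X.T.image bar := by
      intro c hc
      rcases Finset.mem_union.1 (hmem c hc) with h | h
      · exact absurd h (hrev c hc)
      · exact h
    have hnd : γ.Nodup := by
      rw [Multiset.nodup_iff_count_le_one]
      intro c
      by_cases hcγ : c ∈ γ
      · obtain ⟨y, hy, hbay⟩ := Finset.mem_image.1 (him c hcγ)
        have h0 := hPRE (Sum.inr (Sum.inr (⟨y, hy⟩, ⟨y, hy⟩)))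
        rw [PREZ_kill] at h0
        have hm : markZ X RX.mark RY.mark u
            (Sum.inr (Sum.inr ((⟨y, hy⟩ : {a : A // a ∈ X.T}), ⟨y, hy⟩))) = 1 := rfl
        have h0' : γ.count y + γ.count (bar y) ≤ 1 := h0
        rw [hbay] at h0'
        omega
      · rw [Multiset.count_eq_zero.2 hcγ]
        omega
    have hQ : ∀ q : P, (γ.map (fun c => RX.N.post (unbar X bar c) q)).sum
        ≤ RX.mark u q := by
      intro q
      have h0 := hPRE (Sum.inl q)
      rw [PREZ_inl] at h0
      have heq : (γ.map (fun c => if c ∈ X.T then RX.N.pre q c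
          else RX.N.post (unbar X bar c) q)).sum
          = (γ.map (fun c => RX.N.post (unbar X bar c) q)).sum :=
        congrArg Multiset.sum (Multiset.map_congr rfl fun c hc => if_neg (hrev c hc))
      rw [heq] at h0
      exact h0
    have hC : ∀ (p : P') (c : A), c ∈ γ →
        RY.N.pre p c + ((γ.erase c).map (pm RY.N p)).sum ≤ RY.mark u p := by
      intro p c hc
      obtain ⟨hcT, hcbar⟩ := unbar_spec X bar (him c hc)
      have h0 := hPRE (Sum.inr (Sum.inl (p, ⟨unbar X bar c, hcT⟩)))
      rw [PREZ_copy] at h0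
      have heq : (γ.map (fun d => if d = bar (unbar X bar c) then RY.N.pre p d
          else pm RY.N p d)).sum
          = RY.N.pre p c + ((γ.erase c).map (pm RY.N p)).sum := by
        conv_lhs => rw [← Multiset.cons_erase hc]
        rw [Multiset.map_cons, Multiset.sum_cons, if_pos hcbar.symm]
        congr 1
        refine congrArg Multiset.sum (Multiset.map_congr rfl ?_)
        intro d hd
        have hdc : d ≠ c := (hnd.mem_erase_iff.1 hd).1
        exact if_neg (fun h => hdc (h.trans hcbar))
      rw [heq] at h0
      exact h0
    obtain ⟨w, hw⟩ := glue RX RY hlab hel hinjbar hfresh γ u him hnd hQ hC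
    refine ⟨w, Or.inr ⟨γ.map (unbar X bar), ?_, hw⟩⟩
    rw [Multiset.map_map]
    conv_lhs => rw [← Multiset.map_id' γ]
    refine (Multiset.map_congr rfl ?_).symm
    intro c hc
    exact (unbar_spec X bar (him c hc)).2

end Complete

end StmtAux
/-- For a solvable set CEST-system whose sequential reverse is solvable, the
direct reverse is solvable. -/
theorem stmt17 {S A : Type*} [DecidableEq A] (X : STS S A) (bar : A → A)
    (hX : X.IsCEST)
    (hset : ∀ s (α : Multiset A) s', X.tr s α s' → α.Nodup)
    (hg : X.GoodRev bar)
    (hsX : STSSolvable X)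
    (hseqrev : STSSolvable ((X.seqR).revSTS bar)) :
    STSSolvable (X.revSTS bar) := by
  classical
  obtain ⟨hlab, _hce, hrea, hel, hseq⟩ := hX
  obtain ⟨hinjbar, hfresh⟩ := hg
  obtain ⟨n, N, hiso⟩ := hsX
  obtain ⟨m, N', hiso'⟩ := hseqrev
  let RX : StmtAux.Real X (Fin n) := StmtAux.Real.ofIso hiso
  let RY : StmtAux.Real ((X.seqR).revSTS bar) (Fin m) := StmtAux.Real.ofIso hiso'
  have hsound : ∀ s (γ : Multiset A) s', (X.revSTS bar).tr s γ s' →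
      (StmtAux.NZ X bar RX.N RY.N RX.mark RY.mark).Enabled
          (StmtAux.markZ X RX.mark RY.mark s) γ ∧
        StmtAux.markZ X RX.mark RY.mark s' =
          (StmtAux.NZ X bar RX.N RY.N RX.mark RY.mark).fire
            (StmtAux.markZ X RX.mark RY.mark s) γ := by
    intro s γ s' hz
    rcases hz with hx | ⟨α, rfl, hx⟩
    · exact StmtAux.sound_fwd RX RY hlab hseq hset hfresh hx
    · exact StmtAux.sound_rev RX RY hlab hseq hset hinjbar hfresh hx
  have R : StmtAux.Real (X.revSTS bar)
      (StmtAux.PZ X (P := Fin n) (P' := Fin m)) :=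
    { N := StmtAux.NZ X bar RX.N RY.N RX.mark RY.mark
      mark := StmtAux.markZ X RX.mark RY.mark
      hinit := rfl
      hT := rfl
      hinj := by
        intro s s' h
        exact RX.hinj (funext fun q => congrFun h (Sum.inl q))
      hsound := hsound
      hcomplete := by
        intro s γ hE
        obtain ⟨w, hz⟩ :=
          StmtAux.completeZ RX RY hlab hseq hel hset hinjbar hfresh s γ hE
        exact ⟨w, hz, (hsound s γ w hz).2⟩ }
  have hzrea : ∀ s, (X.revSTS bar).ReachFrom (X.revSTS bar).init s := by
    have key : ∀ t, X.ReachFrom X.init t → (X.revSTS bar).ReachFrom X.init t := by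
      intro t h
      induction h with
      | refl => exact STS.ReachFrom.refl _
      | step h htr ih => exact STS.ReachFrom.step ih (Or.inl htr)
    exact fun s => key s (hrea s)
  exact R.solvable hzrea
end

section
/- Let TS be the step transition system with states {v₁,…,v₆}, actions {a,b}, initial state v₁, and transitions v₁–a→v₂, v₁–b→v₃, v₁–(ab)→v₄ (the two-element step containing a and b), v₂–b→v₄, v₃–a→v₄, v₂–a→v₅, v₅–a→v₆, v₃–b→v₆ (together with the empty-step self-loops at every state). Then there is no PT-net N with split reverses such that CRG_N is a split reverse of TS. -/
/-- The step transition system of Example `ex:splitneg`. -/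
def exTS {A : Type*} [DecidableEq A] (a b : A) : STS (Fin 6) A where
  T := {a, b}
  tr s α s' :=
    (α = 0 ∧ s = s') ∨
    (s = 0 ∧ α = {a} ∧ s' = 1) ∨
    (s = 0 ∧ α = {b} ∧ s' = 2) ∨
    (s = 0 ∧ α = {a, b} ∧ s' = 3) ∨
    (s = 1 ∧ α = {b} ∧ s' = 3) ∨
    (s = 2 ∧ α = {a} ∧ s' = 3) ∨
    (s = 1 ∧ α = {a} ∧ s' = 4) ∨
    (s = 4 ∧ α = {a} ∧ s' = 5) ∨
    (s = 2 ∧ α = {b} ∧ s' = 5)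
  init := 0

/-- No PT-net with split reverses has a concurrent reachability graph which is
a split reverse of `exTS`. -/
theorem stmt19 {A : Type*} [DecidableEq A] (a b : A) (hab : a ≠ b)
    (bar : A → A)
    (hinj : Set.InjOn bar ↑(exTS a b).T)
    (hfresh : ∀ x ∈ (exTS a b).T, bar x ∉ (exTS a b).T) :
    ¬ ∃ (noidx : A → A) (n : ℕ) (N : PTNet (Fin n) A) (Y : STS (Fin 6) A),
        (exTS a b).IsSplitRev bar noidx Y ∧
        STS.IsoSTS Y (CRG N) ∧
        ∀ x ∈ (exTS a b).T, ∃ t ∈ N.T, noidx t = bar x ∧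
          ∀ p : Fin n, (N.post t p : ℤ) - (N.pre p t : ℤ) =
            -((N.post x p : ℤ) - (N.pre p x : ℤ)) := by
  rintro ⟨noidx, n, N, Y, ⟨hinit, hYlab, hTsub, hid, hdisj, hseq, himg, hiff⟩,
    ⟨ψ, hψ0, hψT, hψtr⟩, -⟩
  have haT : a ∈ (exTS a b).T := by simp [exTS]
  have hbT : b ∈ (exTS a b).T := by simp [exTS]
  -- forward transitions of exTS are transitions of Y
  have hXY : ∀ (s : Fin 6) (α : Multiset A) (s' : Fin 6),
      (∀ c ∈ α, c ∈ (exTS a b).T) → (exTS a b).tr s α s' → Y.tr s α s' := by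
    intro s α s' hα htr
    obtain ⟨δ, hδ, heq⟩ := (hiff s α s').mpr (Or.inl htr)
    have hdd : ∀ d ∈ δ, noidx d = d := by
      intro d hd
      have hdY : d ∈ Y.T := hYlab _ _ _ hδ d hd
      have hnd : noidx d ∈ (exTS a b).T := hα _ (heq ▸ Multiset.mem_map_of_mem _ hd)
      by_cases hdX : d ∈ (exTS a b).T
      · exact hid d hdX
      · exact absurd hnd (Finset.disjoint_right.mp hdisj
          (Finset.mem_image.mpr ⟨d, Finset.mem_sdiff.mpr ⟨hdY, hdX⟩, rfl⟩))
    have hαδ : α = δ := by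
      rw [heq]
      calc Multiset.map noidx δ = Multiset.map id δ := Multiset.map_congr rfl hdd
      _ = δ := Multiset.map_id δ
    rwa [hαδ]
  -- markings
  set Mk : Fin 6 → Fin n → ℕ := fun s => (ψ s).1 with hMk
  -- effect equations for the forward transitions
  have fwd : ∀ (s s' : Fin 6) (c : A), c ∈ (exTS a b).T → (exTS a b).tr s {c} s' →
      ∀ p, (Mk s' p : ℤ) = Mk s p - N.pre p c + N.post c p := by
    intro s s' c hc htr p
    have hY := hXY s {c} s' (by intro x hx; rwa [Multiset.mem_singleton.mp hx]) htr
    obtain ⟨⟨-, hle⟩, hfi⟩ := (hψtr _ _ _).mp hY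
    have h1 : Mk s' p = Mk s p - N.PRE {c} p + N.POST {c} p := by
      show (ψ s').1 p = _
      rw [hfi]; rfl
    have h2 : N.PRE {c} p ≤ Mk s p := hle p
    have hPRE : N.PRE {c} p = N.pre p c := by simp [PTNet.PRE]
    have hPOST : N.POST {c} p = N.post c p := by simp [PTNet.POST]
    rw [hPRE, hPOST] at h1
    rw [hPRE] at h2
    omega
  have h01 := fwd 0 1 a haT (by simp [exTS])
  have h14 := fwd 1 4 a haT (by simp [exTS])
  have h45 := fwd 4 5 a haT (by simp [exTS])
  have h02 := fwd 0 2 b hbT (by simp [exTS])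
  have h25 := fwd 2 5 b hbT (by simp [exTS])
  have h23 := fwd 2 3 a haT (by simp [exTS])
  -- the reverse of the step {a,b} at state 3
  have hpair : (STS.revSTS (exTS a b) bar).tr 3 {bar a, bar b} 0 :=
    Or.inr ⟨{a, b}, by simp, by simp [exTS]⟩
  obtain ⟨δ, hYδ, hmapδ⟩ := (hiff _ _ _).mpr hpair
  have hcard : Multiset.card δ = 2 := by
    have := congrArg Multiset.card hmapδ
    simpa using this.symm
  obtain ⟨u₀, v₀, hδeq⟩ := Multiset.card_eq_two.mp hcard
  subst hδeq
  rw [show Multiset.map noidx {u₀, v₀} = {noidx u₀, noidx v₀} by simp] at hmapδ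
  -- extract u with noidx u = bar a and v with noidx v = bar b
  obtain ⟨u, v, hYuv, hu, hv⟩ : ∃ u v : A, Y.tr 3 {u, v} 0 ∧
      noidx u = bar a ∧ noidx v = bar b := by
    have hmem : noidx u₀ ∈ ({bar a, bar b} : Multiset A) := by
      rw [hmapδ]; exact Multiset.mem_cons_self _ _
    rcases Multiset.mem_cons.mp hmem with h1 | h1
    · refine ⟨u₀, v₀, hYδ, h1, ?_⟩
      rw [h1] at hmapδ
      have := (Multiset.cons_inj_right (bar a)).mp hmapδ.symm
      simpa using this
    · have h1' : noidx u₀ = bar b := Multiset.mem_singleton.mp h1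
      refine ⟨v₀, u₀, by rwa [Multiset.pair_comm] at hYδ, ?_, h1'⟩
      rw [h1', Multiset.pair_comm (bar a) (bar b)] at hmapδ
      have := (Multiset.cons_inj_right (bar b)).mp hmapδ.symm
      simpa using this
  obtain ⟨⟨huvT, huvle⟩, -⟩ := (hψtr _ _ _).mp hYuv
  have huT : u ∈ N.T := huvT u (Multiset.mem_cons_self _ _)
  have hvT : v ∈ N.T := huvT v (by simp)
  have hlep : ∀ p, N.pre p u + N.pre p v ≤ Mk 3 p := by
    intro p
    have := huvle p
    simpa [PTNet.PRE] using this
  -- firing an enabled singleton from a state gives a Y transition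
  have step1 : ∀ (s : Fin 6) (t : A), t ∈ N.T → (∀ p, N.pre p t ≤ Mk s p) →
      ∃ s' : Fin 6, Y.tr s {t} s' ∧ ∀ p, (Mk s' p : ℤ) = Mk s p - N.pre p t + N.post t p := by
    intro s t htT hle
    have hle' : ∀ p, N.PRE {t} p ≤ (ψ s).1 p := by
      intro p; have := hle p; simpa [PTNet.PRE] using this
    have hen : N.Enabled (ψ s).1 {t} :=
      ⟨fun x hx => by rwa [Multiset.mem_singleton.mp hx], hle'⟩
    have hreach : N.Reach (N.fire (ψ s).1 {t}) := PTNet.Reach.step (ψ s).2 hen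
    refine ⟨ψ.symm ⟨_, hreach⟩, ?_, ?_⟩
    · refine (hψtr s {t} _).mpr ?_
      rw [Equiv.apply_symm_apply]
      exact ⟨hen, rfl⟩
    · intro p
      have h1 : Mk (ψ.symm ⟨_, hreach⟩) p = N.fire (ψ s).1 {t} p := by
        show (ψ (ψ.symm ⟨_, hreach⟩)).1 p = _
        rw [Equiv.apply_symm_apply]
      have h2 : N.fire (ψ s).1 {t} p = (ψ s).1 p - N.PRE {t} p + N.POST {t} p := rfl
      have h3 := hle' p
      have hPRE : N.PRE {t} p = N.pre p t := by simp [PTNet.PRE]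
      have hPOST : N.POST {t} p = N.post t p := by simp [PTNet.POST]
      rw [h2, hPRE, hPOST] at h1
      rw [hPRE] at h3
      show ((ψ (ψ.symm ⟨_, hreach⟩)).1 p : ℤ) = _
      have h1' : (ψ (ψ.symm ⟨_, hreach⟩)).1 p = (ψ s).1 p - N.pre p t + N.post t p := h1
      have haux : Mk s p = (ψ s).1 p := rfl
      omega
  -- fire v from state 3: lands in state 1
  obtain ⟨s₁, hY3v, hfi3v⟩ := step1 3 v hvT (fun p => le_trans (by omega) (hlep p))
  have hrev3v : (STS.revSTS (exTS a b) bar).tr 3 {bar b} s₁ := by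
    rw [← hv]
    exact (hiff _ _ _).mp ⟨{v}, hY3v, by simp⟩
  have hbarab : bar a ≠ bar b := fun h => hab (hinj haT hbT h)
  have hs₁ : s₁ = 1 := by
    rcases hrev3v with h | ⟨α, hα, htr⟩
    · exfalso; simp [exTS] at h
    · simp only [exTS] at htr
      rcases htr with ⟨rfl, -⟩ | ⟨-, rfl, h3⟩ | ⟨-, rfl, h3⟩ | ⟨-, rfl, -⟩ |
        ⟨hs, rfl, -⟩ | ⟨-, rfl, -⟩ | ⟨-, rfl, h3⟩ | ⟨-, rfl, h3⟩ | ⟨-, rfl, h3⟩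
      · exfalso; simp at hα
      · exact absurd h3 (by decide)
      · exact absurd h3 (by decide)
      · exfalso
        have := congrArg Multiset.card hα
        simp at this
      · exact hs
      · exfalso
        rw [Multiset.map_singleton] at hα
        exact hbarab (Multiset.singleton_inj.mp hα).symm
      · exact absurd h3 (by decide)
      · exact absurd h3 (by decide)
      · exact absurd h3 (by decide)
  subst hs₁
  -- u is enabled at the marking of state 2
  have hu2 : ∀ p, N.pre p u ≤ Mk 2 p := by
    intro p
    have e01 := h01 p
    have e14 := h14 p
    have e45 := h45 p
    have e02 := h02 p
    have e25 := h25 p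
    have e23 := h23 p
    have ev := hfi3v p
    have hl := hlep p
    omega
  -- fire u from state 2: impossible
  obtain ⟨s₂, hY2u, -⟩ := step1 2 u huT hu2
  have hrev2u : (STS.revSTS (exTS a b) bar).tr 2 {bar a} s₂ := by
    rw [← hu]
    exact (hiff _ _ _).mp ⟨{u}, hY2u, by simp⟩
  rcases hrev2u with h | ⟨α, hα, htr⟩
  · simp only [exTS] at h
    rcases h with ⟨h1, -⟩ | ⟨h1, -⟩ | ⟨h1, -⟩ | ⟨h1, -⟩ | ⟨h1, -⟩ |
      ⟨-, h2, -⟩ | ⟨h1, -⟩ | ⟨h1, -⟩ | ⟨-, h2, -⟩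
    · exact absurd h1 (by simp)
    · exact absurd h1 (by decide)
    · exact absurd h1 (by decide)
    · exact absurd h1 (by decide)
    · exact absurd h1 (by decide)
    · exact hfresh a haT (by rw [Multiset.singleton_inj.mp h2]; exact haT)
    · exact absurd h1 (by decide)
    · exact absurd h1 (by decide)
    · exact hfresh a haT (by rw [Multiset.singleton_inj.mp h2]; exact hbT)
  · simp only [exTS] at htr
    rcases htr with ⟨rfl, -⟩ | ⟨-, rfl, h3⟩ | ⟨-, rfl, -⟩ | ⟨-, rfl, h3⟩ |
      ⟨-, rfl, h3⟩ | ⟨-, rfl, h3⟩ | ⟨-, rfl, h3⟩ | ⟨-, rfl, h3⟩ | ⟨-, rfl, h3⟩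
    · simp at hα
    · exact absurd h3 (by decide)
    · rw [Multiset.map_singleton] at hα
      exact hbarab (Multiset.singleton_inj.mp hα)
    · exact absurd h3 (by decide)
    · exact absurd h3 (by decide)
    · exact absurd h3 (by decide)
    · exact absurd h3 (by decide)
    · exact absurd h3 (by decide)
    · exact absurd h3 (by decide)
end
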